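/- arXiv:0902.1797 — 2 statements merged into one kernel-verified Lean document; each statement's English description precedes it below -/
import Mathlib

section
/- Let (A_•, f_•) be a complex of length n in C. If Hom(A_{i+k+2}⟦k⟧, A_i) = 0 for all i ≥ 0 and k ≥ 1 (whenever i + k + 2 ≤ n), then (A_•, f_•) admits a convolution. -/
/-!
Build the Postnikov system one triangle at a time. Writing `Y i = (B i)⟦-i⟧`, start from
`Y 0 = A 0`; given `g i : Y i ⟶ A i`, lift `f i` to `h i : A (i + 1) ⟶ Y i` and let `Y (i + 1)`
be a fiber of `h i`. A lift of `f (i + 1)` along `g (i + 1)` exists iff `f (i + 1) ≫ h i = 0`.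
This composite dies after `g i` because `f` is a complex, so it factors through `Y (i - 1)⟦-1⟧`
and vanishes once `Hom(A (i + 2)⟦1⟧, Y (i - 1)) = 0`. The vanishing of
`Hom(A (j + k + 2)⟦k⟧, Y j)` for `k ≥ 1` is the hypothesis when `j = 0`, and it passes from
`(j, k + 1)` to `(j + 1, k)` along the triangle `Y (j + 1) → A (j + 1) → Y j →`.
-/

open CategoryTheory CategoryTheory.Limits CategoryTheory.Pretriangulated

variable {C : Type*} [Category C] [Preadditive C] [HasZeroObject C] [HasShift C ℤ]
  [∀ n : ℤ, (shiftFunctor C n).Additive] [Pretriangulated C]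

/-- A Postnikov system for the length-`n` complex
`A n ⟶ A (n-1) ⟶ ⋯ ⟶ A 0` (with differentials `f i : A (i+1) ⟶ A i`):
objects `B 0 = A 0, B 1, …, B n` together with morphisms
`g i : (B i)⟦-i⟧ ⟶ A i` and (paper indexing) `h (i+1) : A (i+1) ⟶ (B i)⟦-i⟧` such that
each `(B (i+1))⟦-(i+1)⟧ ⟶ A (i+1) ⟶ (B i)⟦-i⟧` extends to a distinguished triangle and
`g i ∘ h (i+1) = f (i+1)`.  The identification `B 0 = A 0` (with `g 0 = id`, `h 0 = id`)
is recorded by requiring `g 0` to be an isomorphism. -/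
structure PostnikovSystem (n : ℕ) (A : ℕ → C) (f : ∀ i : ℕ, A (i + 1) ⟶ A i) where
  B : ℕ → C
  g : ∀ i : ℕ, (B i)⟦(-(i : ℤ))⟧ ⟶ A i
  h : ∀ i : ℕ, A (i + 1) ⟶ (B i)⟦(-(i : ℤ))⟧
  g0_isIso : IsIso (g 0)
  comm : ∀ i : ℕ, i < n → h i ≫ g i = f i
  tri : ∀ i : ℕ, i < n →
    ∃ d : (B i)⟦(-(i : ℤ))⟧ ⟶ ((B (i + 1))⟦(-((i : ℤ) + 1))⟧)⟦(1 : ℤ)⟧,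
      Triangle.mk (g (i + 1)) (h i) d ∈ distTriang C

/-- `X` is a (right) convolution of the length-`n` complex `(A, f)` if there is a Postnikov
system for it whose final object `B n` is isomorphic to `X`. -/
def IsConvolution (n : ℕ) (A : ℕ → C) (f : ∀ i : ℕ, A (i + 1) ⟶ A i) (X : C) : Prop :=
  ∃ P : PostnikovSystem n A f, Nonempty (P.B n ≅ X)

namespace CategoryTheory.Pretriangulated

noncomputable def fiber {X Y : C} (h : X ⟶ Y) : C :=
  (distinguished_cocone_triangle₁ h).choose

noncomputable def fiber.ι {X Y : C} (h : X ⟶ Y) : fiber h ⟶ X :=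
  (distinguished_cocone_triangle₁ h).choose_spec.choose

lemma exists_distinguished_fiber {X Y : C} (h : X ⟶ Y) :
    ∃ d : Y ⟶ (fiber h)⟦(1 : ℤ)⟧, Triangle.mk (fiber.ι h) h d ∈ distTriang C :=
  (distinguished_cocone_triangle₁ h).choose_spec.choose_spec

lemma eq_zero_of_comp_mor₁_eq_zero {T : Triangle C} (hT : T ∈ distTriang C) {X : C}
    (φ : X ⟶ T.obj₁) (hφ : φ ≫ T.mor₁ = 0) (hX : ∀ ψ : X⟦(1 : ℤ)⟧ ⟶ T.obj₃, ψ = 0) :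
    φ = 0 := by
  obtain ⟨ψ, rfl⟩ := Triangle.coyoneda_exact₂ _ (inv_rot_of_distTriang _ hT) φ hφ
  have hψ : ψ⟦(1 : ℤ)⟧' = 0 :=
    (Preadditive.IsIso.comp_right_eq_zero _ (shiftNegShift T.obj₃ (1 : ℤ)).hom).mp (hX _)
  rw [(Functor.map_eq_zero_iff _).mp hψ]
  exact zero_comp

lemma mk_mem_distTriang_of_iso {X₁ X₁' X₂ X₃ X₃' : C} (e₁ : X₁' ≅ X₁) (e₃ : X₃' ≅ X₃)
    {u : X₁ ⟶ X₂} {v : X₂ ⟶ X₃} {w : X₃ ⟶ X₁⟦(1 : ℤ)⟧} (h : Triangle.mk u v w ∈ distTriang C) :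
    Triangle.mk (e₁.hom ≫ u) (v ≫ e₃.inv) (e₃.hom ≫ w ≫ e₁.inv⟦(1 : ℤ)⟧') ∈ distTriang C := by
  refine isomorphic_distinguished _ h _ (Triangle.isoMk _ _ e₁ (Iso.refl _) e₃ ?_ ?_ ?_)
  · exact Category.comp_id _
  · simp [Triangle.mk]
  · simp [Triangle.mk, ← Functor.map_comp]

end CategoryTheory.Pretriangulated

namespace PostnikovSystem

variable {n : ℕ} {A : ℕ → C} {f : ∀ i : ℕ, A (i + 1) ⟶ A i}

noncomputable def ofIso (B Y : ℕ → C) (e : ∀ i : ℕ, (B i)⟦(-(i : ℤ))⟧ ≅ Y i)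
    (g : ∀ i, Y i ⟶ A i) (h : ∀ i, A (i + 1) ⟶ Y i) [IsIso (g 0)]
    (comm : ∀ i, i < n → h i ≫ g i = f i)
    (tri : ∀ i, i < n → ∃ d : Y i ⟶ (Y (i + 1))⟦(1 : ℤ)⟧,
      Triangle.mk (g (i + 1)) (h i) d ∈ distTriang C) :
    PostnikovSystem n A f where
  B := B
  g i := (e i).hom ≫ g i
  h i := h i ≫ (e i).inv
  g0_isIso := inferInstance
  comm i hi := by rw [Category.assoc, Iso.inv_hom_id_assoc, comm i hi]
  tri i hi := by
    obtain ⟨d, hd⟩ := tri i hi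
    exact ⟨_, mk_mem_distTriang_of_iso (e (i + 1)) (e i) hd⟩

end PostnikovSystem

section LiftOrZero

variable {D : Type*} [Category D] [HasZeroMorphisms D]

open Classical in
noncomputable def liftOrZero {X Y Z : D} (g : Y ⟶ Z) (f : X ⟶ Z) : X ⟶ Y :=
  if hl : ∃ l : X ⟶ Y, l ≫ g = f then hl.choose else 0

lemma liftOrZero_comp {X Y Z : D} {g : Y ⟶ Z} {f : X ⟶ Z} (hl : ∃ l : X ⟶ Y, l ≫ g = f) :
    liftOrZero g f ≫ g = f := by
  rw [liftOrZero, dif_pos hl]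
  exact hl.choose_spec

end LiftOrZero

section Construction

noncomputable def postnikovStage (A : ℕ → C) (f : ∀ i : ℕ, A (i + 1) ⟶ A i) :
    ∀ i : ℕ, Σ Y : C, Y ⟶ A i
  | 0 => ⟨A 0, 𝟙 _⟩
  | i + 1 => ⟨fiber (liftOrZero (postnikovStage A f i).2 (f i)), fiber.ι _⟩

variable {A : ℕ → C} {f : ∀ i : ℕ, A (i + 1) ⟶ A i}

lemma exists_distinguished_postnikovStage (i : ℕ) :
    ∃ d : (postnikovStage A f i).1 ⟶ (postnikovStage A f (i + 1)).1⟦(1 : ℤ)⟧,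
      Triangle.mk (postnikovStage A f (i + 1)).2 (liftOrZero (postnikovStage A f i).2 (f i)) d
        ∈ distTriang C :=
  exists_distinguished_fiber _

lemma postnikovStage_hom_eq_zero {n : ℕ}
    (hvan : ∀ i k : ℕ, 1 ≤ k → i + k + 2 ≤ n →
      ∀ φ : (A (i + k + 2))⟦(k : ℤ)⟧ ⟶ A i, φ = 0) (j : ℕ) :
    ∀ k : ℕ, 1 ≤ k → j + k + 2 ≤ n →
      ∀ φ : (A (j + k + 2))⟦(k : ℤ)⟧ ⟶ (postnikovStage A f j).1, φ = 0 := by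
  induction j with
  | zero => exact hvan 0
  | succ j ih =>
    intro k hk hkn φ
    obtain ⟨d, hd⟩ := exists_distinguished_postnikovStage (f := f) j
    refine eq_zero_of_comp_mor₁_eq_zero hd φ (hvan (j + 1) k hk hkn _) fun ψ => ?_
    have hvan' := ih (k + 1) (by omega) (by omega)
    rw [show j + (k + 1) + 2 = j + 1 + k + 2 by omega] at hvan'
    exact (Preadditive.IsIso.comp_left_eq_zero
      ((shiftFunctorAdd' C (k : ℤ) 1 ((k + 1 : ℕ) : ℤ) (by push_cast; rfl)).hom.app _) ψ).mp
      (hvan' _)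

lemma exists_lift_postnikovStage {n : ℕ} (hcx : ∀ i : ℕ, i + 1 < n → f (i + 1) ≫ f i = 0)
    (hvan : ∀ i k : ℕ, 1 ≤ k → i + k + 2 ≤ n →
      ∀ φ : (A (i + k + 2))⟦(k : ℤ)⟧ ⟶ A i, φ = 0) (i : ℕ) (hi : i < n) :
    ∃ l : A (i + 1) ⟶ (postnikovStage A f i).1, l ≫ (postnikovStage A f i).2 = f i := by
  induction i with
  | zero => exact ⟨f 0, Category.comp_id _⟩
  | succ l ih =>
    have hobs : f (l + 1) ≫ liftOrZero (postnikovStage A f l).2 (f l) = 0 := by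
      have h₀ : (f (l + 1) ≫ liftOrZero (postnikovStage A f l).2 (f l)) ≫
          (postnikovStage A f l).2 = 0 := by
        rw [Category.assoc, liftOrZero_comp (ih (by omega)), hcx l (by omega)]
      cases l with
      | zero => exact (Category.comp_id _).symm.trans h₀
      | succ p =>
        obtain ⟨d, hd⟩ := exists_distinguished_postnikovStage (f := f) p
        exact eq_zero_of_comp_mor₁_eq_zero hd _ h₀
          (postnikovStage_hom_eq_zero hvan p 1 le_rfl (by omega))
    obtain ⟨d, hd⟩ := exists_distinguished_postnikovStage (f := f) l
    obtain ⟨lift, hlift⟩ := Triangle.coyoneda_exact₂ _ hd (f (l + 1)) hobs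
    exact ⟨lift, hlift.symm⟩

end Construction

theorem convolution_exists
    (n : ℕ) (A : ℕ → C) (f : ∀ i : ℕ, A (i + 1) ⟶ A i)
    (hcx : ∀ i : ℕ, i + 1 < n → f (i + 1) ≫ f i = 0)
    (hvan : ∀ i k : ℕ, 1 ≤ k → i + k + 2 ≤ n →
      ∀ φ : (A (i + k + 2))⟦(k : ℤ)⟧ ⟶ A i, φ = 0) :
    ∃ X : C, IsConvolution n A f X := by
  let Y : ℕ → C := fun i => (postnikovStage A f i).1
  let g : ∀ i, Y i ⟶ A i := fun i => (postnikovStage A f i).2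
  have : IsIso (g 0) := inferInstanceAs (IsIso (𝟙 (A 0)))
  let P : PostnikovSystem n A f := .ofIso (fun i => (Y i)⟦(i : ℤ)⟧) Y
    (fun i => shiftShiftNeg (Y i) (i : ℤ)) g (fun i => liftOrZero (g i) (f i))
    (fun i hi => liftOrZero_comp (exists_lift_postnikovStage hcx hvan i hi))
    (fun i _ => exists_distinguished_postnikovStage i)
  exact ⟨P.B n, P, ⟨Iso.refl _⟩⟩
end

section
/- Let ℓ = n(n−1)/2 and let c_1, …, c_ℓ ∈ {0, …, n−2} be indices such that the product s_{c_1} s_{c_2} ⋯ s_{c_ℓ} of the corresponding adjacent transpositions equals the longest element w_0 of the symmetric group on {0, …, n−1} (the order-reversing permutation); since the length of w_0 is n(n−1)/2, such an expression is automatically reduced. Set ∂_{w_0} := ∂_{c_1} ∘ ∂_{c_2} ∘ ⋯ ∘ ∂_{c_ℓ}. If R is a nontrivial commutative ring, then ∂_{w_0} is a nonzero operator on R[x_0, …, x_{n−1}], i.e. there exists a polynomial g with ∂_{w_0}(g) ≠ 0. -/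
/-!
Reduce the coefficients modulo a maximal ideal and pass to the fraction field `K` of the
resulting polynomial ring, on which `Sₙ` acts by field automorphisms and each `x_c - x_{c+1}`
is invertible. There every composite `∂_{c₁} ∘ ⋯ ∘ ∂_{cₘ}` expands as `∑_w a_w · w` with
coefficients `a_w ∈ K`, and `a_w ≠ 0` only if `w` is the product of a subword. For a word of
length `n(n-1)/2` with product `w₀`, the number of inversions shows that no proper subword has
product `w₀`, which forces `a_{w₀} ≠ 0`. By Dedekind's independence of the distinct characters
`g ↦ w • g`, the operator `∑_w a_w · w` cannot vanish on all polynomials.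
-/

open MvPolynomial Finset
open scoped List

namespace Equiv.Perm

variable {n : ℕ}

def inversions (w : Perm (Fin n)) : Finset (Fin n × Fin n) :=
  {p | p.1 < p.2 ∧ w p.2 < w p.1}

lemma mem_inversions {w : Perm (Fin n)} {p : Fin n × Fin n} :
    p ∈ w.inversions ↔ p.1 < p.2 ∧ w p.2 < w p.1 := by
  simp [inversions]

lemma inversions_one : (1 : Perm (Fin n)).inversions = ∅ := by
  ext p
  simp only [mem_inversions, coe_one, id_eq, notMem_empty, iff_false, not_and, not_lt]
  exact le_of_lt

lemma apply_eq_of_mem_inversions_swap_mul {a b : Fin n} (hab : (a : ℕ) + 1 = b)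
    {w : Perm (Fin n)} {p : Fin n × Fin n} (hp : p ∈ (swap a b * w).inversions)
    (hp' : p ∉ w.inversions) : w p.1 = a ∧ w p.2 = b := by
  simp only [mem_inversions, mul_apply, swap_apply_def, Fin.lt_def, Fin.ext_iff] at hp hp' ⊢
  split_ifs at hp <;> omega

lemma card_inversions_swap_mul_le {a b : Fin n} (hab : (a : ℕ) + 1 = b) (w : Perm (Fin n)) :
    #(swap a b * w).inversions ≤ #w.inversions + 1 := by
  have hnew : (swap a b * w).inversions \ w.inversions ⊆ {(w⁻¹ a, w⁻¹ b)} := by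
    intro p hp
    obtain ⟨hp, hp'⟩ := mem_sdiff.mp hp
    obtain ⟨h1, h2⟩ := apply_eq_of_mem_inversions_swap_mul hab hp hp'
    rw [mem_singleton, ← h1, ← h2]
    simp
  calc #(swap a b * w).inversions
      ≤ #((swap a b * w).inversions \ w.inversions) + #w.inversions :=
        card_le_card_sdiff_add_card
    _ ≤ 1 + #w.inversions := by grw [card_le_card hnew, card_singleton]
    _ = #w.inversions + 1 := add_comm _ _

lemma card_inversions_revPerm : #(Fin.revPerm : Perm (Fin n)).inversions = n * (n - 1) / 2 := by
  have hrev : (Fin.revPerm : Perm (Fin n)).inversions = univ.filter fun p => p.1 < p.2 := by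
    ext p
    simp only [mem_inversions, Fin.revPerm_apply, Fin.rev_lt_rev, and_self, mem_filter, mem_univ,
      true_and]
  rw [hrev, card_filter, ← univ_product_univ, sum_product_right, ← sum_range_id,
    ← Fin.sum_univ_eq_sum_range]
  refine sum_congr rfl fun y _ => ?_
  rw [← card_filter, ← Fin.card_Iio]
  congr 1
  ext x
  simp

lemma card_inversions_prod_swap_le {N : ℕ} (M : List (Fin (N + 1))) :
    #(M.map fun c => swap c.castSucc c.succ).prod.inversions ≤ M.length := by
  induction M with
  | nil => simp [inversions_one]
  | cons c M ih =>
    rw [List.map_cons, List.prod_cons, List.length_cons]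
    exact (card_inversions_swap_mul_le (by simp) _).trans (by omega)

end Equiv.Perm

section DividedDifference

variable {G K ι : Type*} [Group G] [Field K] [MulSemiringAction G K] (s : ι → G) (δ : ι → K)

def divDiff (i : ι) (f : K) : K := (f - s i • f) / δ i

def divDiffWord : List ι → K → K
  | [] => id
  | i :: M => divDiff s δ i ∘ divDiffWord M

lemma eq_zero_of_forall_sum_mul_smul_eq_zero [Fintype G] {A : Type*} [Monoid A] (φ : A →* K)
    (hφ : Function.Injective fun (w : G) (a : A) => w • φ a) (c : G → K)
    (hc : ∀ a, ∑ w, c w * w • φ a = 0) (w : G) : c w = 0 := by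
  let χ : G → A →* K := fun w => (MulSemiringAction.toRingHom G K w).toMonoidHom.comp φ
  have hχ : Function.Injective χ := fun u v h => hφ (congrArg (⇑) h)
  refine Fintype.linearIndependent_iff.mp ((linearIndependent_monoidHom A K).comp χ hχ) c
    (funext fun a => ?_) w
  simpa [χ] using hc a

lemma map_foldr_eq_divDiffWord {S A : Type*} [CommSemiring S] [CommRing A] [Module S A]
    [MulSemiringAction G A] (φ : A →+* K) (hφ : ∀ (w : G) a, φ (w • a) = w • φ a) (d : ι → A)
    (hd : ∀ i, φ (d i) ≠ 0) (D : ι → A →ₗ[S] A) (hD : ∀ i a, d i * D i a = a - s i • a)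
    (M : List ι) (a : A) :
    φ (M.foldr (fun i acc => (D i).comp acc) LinearMap.id a)
      = divDiffWord s (fun i => φ (d i)) M (φ a) := by
  induction M with
  | nil => rfl
  | cons i M ih =>
    rw [List.foldr_cons, LinearMap.comp_apply, divDiffWord, Function.comp_apply, ← ih, divDiff,
      eq_div_iff (hd i), mul_comm, ← map_mul, hD, map_sub, hφ]

variable [DecidableEq G]

def wordCoeff : List ι → G → K
  | [] => fun w => if w = 1 then 1 else 0
  | i :: M => fun w => (wordCoeff M w - s i • wordCoeff M ((s i)⁻¹ * w)) / δ i

lemma divDiffWord_eq_sum [Fintype G] (M : List ι) (f : K) :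
    divDiffWord s δ M f = ∑ w, wordCoeff s δ M w * w • f := by
  induction M with
  | nil => simp [divDiffWord, wordCoeff]
  | cons i M ih =>
    have hshift : s i • ∑ w, wordCoeff s δ M w * w • f
        = ∑ w, s i • wordCoeff s δ M ((s i)⁻¹ * w) * w • f := by
      rw [smul_sum]
      refine Fintype.sum_equiv (Equiv.mulLeft (s i)) _ _ fun w => ?_
      simp [smul_mul', mul_smul]
    simp only [divDiffWord, wordCoeff, Function.comp_apply, divDiff, ih, hshift, sum_div,
      ← sum_sub_distrib]
    refine sum_congr rfl fun w _ => ?_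
    ring

lemma exists_sublist_of_wordCoeff_ne_zero (M : List ι) (w : G) (hw : wordCoeff s δ M w ≠ 0) :
    ∃ M', M' <+ M ∧ (M'.map s).prod = w := by
  induction M generalizing w with
  | nil =>
    refine ⟨[], List.Sublist.slnil, ?_⟩
    by_contra h
    exact hw (if_neg (Ne.symm h))
  | cons i M ih =>
    by_cases h : wordCoeff s δ M w = 0
    · obtain ⟨M', hM', hprod⟩ :=
        ih ((s i)⁻¹ * w) fun h' => hw (by simp [wordCoeff, h, h'])
      exact ⟨i :: M', hM'.cons_cons i, by simp [hprod]⟩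
    · obtain ⟨M', hM', hprod⟩ := ih w h
      exact ⟨M', hM'.cons i, hprod⟩

/-- With `P` the product of `M`: as `s i * P` is not the product of a subword of `M`, its
coefficient in `∂_i ∘ ∂_M` comes from the term `s i • a_P` alone. -/
lemma wordCoeff_prod_ne_zero (hδ : ∀ i, δ i ≠ 0) (M : List ι)
    (hM : ∀ M', M' <+ M → (M'.map s).prod = (M.map s).prod → M' = M) :
    wordCoeff s δ M (M.map s).prod ≠ 0 := by
  induction M with
  | nil => simp [wordCoeff]
  | cons i M ih =>
    have htail : wordCoeff s δ M (M.map s).prod ≠ 0 :=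
      ih fun M' hM' hprod =>
        List.cons_injective (hM (i :: M') (hM'.cons_cons i) (by simp [hprod]))
    have hlonger : wordCoeff s δ M (s i * (M.map s).prod) = 0 := by
      by_contra h
      obtain ⟨M', hM', hprod⟩ := exists_sublist_of_wordCoeff_ne_zero s δ M _ h
      have hlen := congrArg List.length
        (hM M' (hM'.cons i) (by rw [hprod, List.map_cons, List.prod_cons]))
      have := hM'.length_le
      rw [List.length_cons] at hlen
      omega
    simp [wordCoeff, hlonger, hδ, htail, smul_eq_zero_iff_eq]

end DividedDifference

section Polynomial

variable {σ R k : Type*} [CommRing R] [CommRing k] [IsDomain k]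

noncomputable instance : MulSemiringAction (Equiv.Perm σ) (MvPolynomial σ R) where
  smul w p := rename w p
  one_smul := rename_id_apply
  mul_smul u v p := (rename_rename (⇑v) (⇑u) p).symm
  smul_zero _ := map_zero _
  smul_add _ := map_add _
  smul_one _ := map_one _
  smul_mul _ := map_mul _

lemma MvPolynomial.perm_smul_def (w : Equiv.Perm σ) (p : MvPolynomial σ R) :
    w • p = rename w p := rfl

noncomputable instance : MulSemiringAction (Equiv.Perm σ) (FractionRing (MvPolynomial σ k)) :=
  IsFractionRing.mulSemiringAction _ (MvPolynomial σ k) _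

noncomputable def toFractionRing (ψ : R →+* k) :
    MvPolynomial σ R →+* FractionRing (MvPolynomial σ k) :=
  (algebraMap _ _).comp (map ψ)

lemma toFractionRing_perm_smul (ψ : R →+* k) (w : Equiv.Perm σ) (p : MvPolynomial σ R) :
    toFractionRing ψ (w • p) = w • toFractionRing ψ p := by
  rw [toFractionRing, RingHom.comp_apply, RingHom.comp_apply, MvPolynomial.perm_smul_def,
    map_rename, ← MvPolynomial.perm_smul_def]
  exact algebraMap.smul' w (map ψ p) _

lemma toFractionRing_X_injective (ψ : R →+* k) :
    Function.Injective fun i : σ => toFractionRing ψ (X i) := by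
  intro i j h
  simp only [toFractionRing, RingHom.comp_apply, map_X] at h
  exact X_injective (IsFractionRing.injective _ _ h)

lemma toFractionRing_smul_injective (ψ : R →+* k) :
    Function.Injective fun (w : Equiv.Perm σ) (p : MvPolynomial σ R) => w • toFractionRing ψ p := by
  intro u v h
  ext i
  have := congrFun h (X i)
  simp only [← toFractionRing_perm_smul, MvPolynomial.perm_smul_def, rename_X] at this
  exact toFractionRing_X_injective ψ this

end Polynomial

lemma eq_of_sublist_of_prod_eq_revPerm {N : ℕ} (L : List (Fin (N + 1)))
    (hlen : L.length = (N + 2) * (N + 1) / 2)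
    (hprod : (L.map fun c => Equiv.swap c.castSucc c.succ).prod = Fin.revPerm)
    (M : List (Fin (N + 1))) (hM : M <+ L)
    (hMprod : (M.map fun c => Equiv.swap c.castSucc c.succ).prod
      = (L.map fun c => Equiv.swap c.castSucc c.succ).prod) : M = L := by
  have hinv := Equiv.Perm.card_inversions_prod_swap_le M
  rw [hMprod, hprod, Equiv.Perm.card_inversions_revPerm, Nat.add_sub_cancel, ← hlen] at hinv
  exact hM.eq_of_length_le hinv

theorem demazure_longest_word_nonzero
    {R : Type*} [CommRing R] [Nontrivial R] {N : ℕ}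
    (D : Fin (N + 1) →
      MvPolynomial (Fin (N + 2)) R →ₗ[R] MvPolynomial (Fin (N + 2)) R)
    (hD : ∀ (c : Fin (N + 1)) (g : MvPolynomial (Fin (N + 2)) R),
      (X c.castSucc - X c.succ) * D c g
        = g - rename (Equiv.swap c.castSucc c.succ) g)
    (L : List (Fin (N + 1)))
    (hlen : L.length = (N + 2) * (N + 1) / 2)
    (hprod : (L.map fun c => Equiv.swap c.castSucc c.succ).prod
        = (Fin.revPerm : Equiv.Perm (Fin (N + 2))))
    (Dw : MvPolynomial (Fin (N + 2)) R →ₗ[R] MvPolynomial (Fin (N + 2)) R)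
    (hDw : Dw = L.foldr (fun c acc => (D c).comp acc) LinearMap.id) :
    ∃ g : MvPolynomial (Fin (N + 2)) R, Dw g ≠ 0 := by
  obtain ⟨m, hm⟩ := Ideal.exists_maximal R
  let := Ideal.Quotient.field m
  let φ := toFractionRing (σ := Fin (N + 2)) (Ideal.Quotient.mk m)
  let s (c : Fin (N + 1)) : Equiv.Perm (Fin (N + 2)) := Equiv.swap c.castSucc c.succ
  let δ (c : Fin (N + 1)) := φ (X c.castSucc - X c.succ)
  have hδ (c : Fin (N + 1)) : δ c ≠ 0 := by
    rw [show δ c = φ (X c.castSucc) - φ (X c.succ) from map_sub .., sub_ne_zero]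
    exact (toFractionRing_X_injective _).ne c.castSucc_lt_succ.ne
  have htop : wordCoeff s δ L (L.map s).prod ≠ 0 :=
    wordCoeff_prod_ne_zero s δ hδ L (eq_of_sublist_of_prod_eq_revPerm L hlen hprod)
  by_contra! hzero
  have hvanish (g : MvPolynomial (Fin (N + 2)) R) : ∑ w, wordCoeff s δ L w * w • φ g = 0 := by
    rw [← divDiffWord_eq_sum, ← map_foldr_eq_divDiffWord s φ (toFractionRing_perm_smul _) _ hδ D hD,
      ← hDw, hzero, map_zero]
  exact htop (eq_zero_of_forall_sum_mul_smul_eq_zero φ.toMonoidHom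
    (toFractionRing_smul_injective _) _ hvanish _)
end
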